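/- arXiv:1903.09901 — 3 statements merged into one kernel-verified Lean document; each statement's English description precedes it below -/
import Mathlib

section
/- For every real number x, every y ≥ 0 and every μ > 0, it holds that e^x · y ≤ e^{x²/(2μ²)} + e^{2μ²} · y · exp(μ√(2 log(1+y))). -/
/-! Put `s = √(2 log (1 + y))`, so that `y ≤ e^{s²/2}` and `ψ(y, μ) = y e^{μ s}`. If
`x ≤ 2μ² + μ s`, then `e^x y ≤ e^{2μ²} ψ(y, μ)` directly. Otherwise, writing `x = μ t`, we have
`t - μ ≥ μ + s ≥ 0`, so `(t - μ)² ≥ μ² + s²`, i.e. `x + s²/2 ≤ x²/(2μ²)`, and then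
`e^x y ≤ e^{x + s²/2} ≤ e^{x²/(2μ²)}`. -/

noncomputable def psi (x mu : ℝ) : ℝ := x * Real.exp (mu * Real.sqrt (2 * Real.log (1 + x)))

open Real

lemma le_exp_sqrt_two_mul_log_one_add_sq_div_two {y : ℝ} (hy : 0 ≤ y) :
    y ≤ exp (√(2 * log (1 + y)) ^ 2 / 2) := by
  have hlog : 0 ≤ log (1 + y) := log_nonneg (by linarith)
  rw [sq_sqrt (by linarith), mul_div_cancel_left₀ _ two_ne_zero, exp_log (by linarith)]
  linarith

lemma add_sq_div_two_le_sq_div {x s mu : ℝ} (hmu : 0 < mu) (hs : 0 ≤ s)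
    (hx : 2 * mu ^ 2 + mu * s ≤ x) : x + s ^ 2 / 2 ≤ x ^ 2 / (2 * mu ^ 2) := by
  have hshift : mu * (mu + s) ≤ x - mu ^ 2 := by linarith
  have hsq : (mu * (mu + s)) ^ 2 ≤ (x - mu ^ 2) ^ 2 :=
    pow_le_pow_left₀ (by positivity) hshift 2
  rw [le_div_iff₀ (by positivity)]
  nlinarith [mul_nonneg (sq_nonneg mu) (mul_nonneg hmu.le hs)]

theorem stmt_0 (x y mu : ℝ) (hy : 0 ≤ y) (hmu : 0 < mu) :
    Real.exp x * y ≤ Real.exp (x ^ 2 / (2 * mu ^ 2)) + Real.exp (2 * mu ^ 2) * psi y mu := by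
  set s := √(2 * log (1 + y))
  have hpsi : psi y mu = y * exp (mu * s) := rfl
  have hpsi_nonneg : 0 ≤ exp (2 * mu ^ 2) * psi y mu := by rw [hpsi]; positivity
  rcases le_or_gt x (2 * mu ^ 2 + mu * s) with hx | hx
  · calc exp x * y ≤ exp (2 * mu ^ 2 + mu * s) * y := by gcongr
      _ = exp (2 * mu ^ 2) * psi y mu := by rw [hpsi, exp_add]; ring
      _ ≤ _ := le_add_of_nonneg_left (exp_pos _).le
  · calc exp x * y ≤ exp x * exp (s ^ 2 / 2) := by
          gcongr; exact le_exp_sqrt_two_mul_log_one_add_sq_div_two hy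
      _ = exp (x + s ^ 2 / 2) := (exp_add _ _).symm
      _ ≤ exp (x ^ 2 / (2 * mu ^ 2)) :=
          exp_le_exp.2 (add_sq_div_two_le_sq_div hmu (sqrt_nonneg _) hx.le)
      _ ≤ _ := le_add_of_nonneg_right hpsi_nonneg
end

section
/- For every fixed μ > 0, the function ψ(·,μ) : [0,∞) → [0,∞) defined by ψ(x,μ) = x·exp(μ√(2 log(1+x))) is convex, i.e. for all λ ∈ [0,1] and x,y ∈ [0,∞), ψ(λx+(1−λ)y, μ) ≤ λψ(x,μ) + (1−λ)ψ(y,μ). -/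
open Real Set

noncomputable def sqrtTwoLog (x : ℝ) : ℝ := √(2 * log (1 + x))

lemma sqrtTwoLog_pos {x : ℝ} (hx : 0 < x) : 0 < sqrtTwoLog x :=
  sqrt_pos.2 (by have := log_pos (by linarith : 1 < 1 + x); positivity)

lemma sqrtTwoLog_sq {x : ℝ} (hx : 0 ≤ x) : sqrtTwoLog x ^ 2 = 2 * log (1 + x) :=
  sq_sqrt (by have := log_nonneg (by linarith : 1 ≤ 1 + x); positivity)

lemma hasDerivAt_sqrtTwoLog {x : ℝ} (hx : 0 < x) :
    HasDerivAt sqrtTwoLog (1 / ((1 + x) * sqrtTwoLog x)) x := by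
  have hs := sqrtTwoLog_pos hx
  have hlog : HasDerivAt (fun y => 2 * log (1 + y)) (2 * (1 / (1 + x))) x := by
    simpa using (((hasDerivAt_id x).const_add 1).log (by positivity)).const_mul 2
  refine (hlog.sqrt (by rw [← sqrtTwoLog_sq hx.le]; positivity)).congr_deriv ?_
  rw [← sqrtTwoLog]
  field_simp

noncomputable def psiDeriv (mu x : ℝ) : ℝ :=
  exp (mu * sqrtTwoLog x) * (1 + mu * x / ((1 + x) * sqrtTwoLog x))

noncomputable def psiDeriv2 (mu x : ℝ) : ℝ :=
  mu * exp (mu * sqrtTwoLog x) *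
    ((1 + x) * sqrtTwoLog x ^ 2 + mu * x * sqrtTwoLog x + (sqrtTwoLog x ^ 2 - x)) /
    ((1 + x) ^ 2 * sqrtTwoLog x ^ 3)

lemma hasDerivAt_exp_mul_sqrtTwoLog (mu : ℝ) {x : ℝ} (hx : 0 < x) :
    HasDerivAt (fun y => exp (mu * sqrtTwoLog y))
      (exp (mu * sqrtTwoLog x) * (mu * (1 / ((1 + x) * sqrtTwoLog x)))) x :=
  ((hasDerivAt_sqrtTwoLog hx).const_mul mu).exp

lemma hasDerivAt_psi (mu : ℝ) {x : ℝ} (hx : 0 < x) :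
    HasDerivAt (psi · mu) (psiDeriv mu x) x := by
  have hs := sqrtTwoLog_pos hx
  refine ((hasDerivAt_id' x).mul (hasDerivAt_exp_mul_sqrtTwoLog mu hx)).congr_deriv ?_
  rw [psiDeriv]
  field_simp

lemma hasDerivAt_psiDeriv (mu : ℝ) {x : ℝ} (hx : 0 < x) :
    HasDerivAt (psiDeriv mu) (psiDeriv2 mu x) x := by
  have hs := sqrtTwoLog_pos hx
  have hden : HasDerivAt (fun y => (1 + y) * sqrtTwoLog y)
      (1 * sqrtTwoLog x + (1 + x) * (1 / ((1 + x) * sqrtTwoLog x))) x :=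
    ((hasDerivAt_id x).const_add 1).mul (hasDerivAt_sqrtTwoLog hx)
  have hfrac := (((hasDerivAt_id' x).const_mul mu).div hden (by positivity)).const_add 1
  refine ((hasDerivAt_exp_mul_sqrtTwoLog mu hx).mul hfrac).congr_deriv ?_
  rw [psiDeriv2, Pi.div_apply]
  field_simp
  ring

lemma psiDeriv2_nonneg {mu : ℝ} (hmu : 0 ≤ mu) {x : ℝ} (hx : 0 < x) : 0 ≤ psiDeriv2 mu x := by
  have hs := sqrtTwoLog_pos hx
  have hlog : 2 * x ≤ (x + 2) * log (1 + x) := by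
    have := le_log_one_add_of_nonneg hx.le
    rw [div_le_iff₀ (by positivity)] at this
    linarith
  have hnum : 0 ≤ (1 + x) * sqrtTwoLog x ^ 2 + mu * x * sqrtTwoLog x + (sqrtTwoLog x ^ 2 - x) := by
    rw [sqrtTwoLog_sq hx.le]
    nlinarith [mul_nonneg (mul_nonneg hmu hx.le) hs.le]
  unfold psiDeriv2
  positivity

lemma continuousOn_psi (mu : ℝ) : ContinuousOn (psi · mu) (Ici 0) := by
  unfold psi
  fun_prop (disch := intro x hx; simp only [mem_Ici] at hx; positivity)

theorem convexOn_psi {mu : ℝ} (hmu : 0 ≤ mu) : ConvexOn ℝ (Ici 0) (psi · mu) := by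
  refine convexOn_of_hasDerivWithinAt2_nonneg (convex_Ici 0) (continuousOn_psi mu)
    (f' := psiDeriv mu) (f'' := psiDeriv2 mu) ?_ ?_ ?_ <;>
    simp only [interior_Ici, mem_Ioi]
  · exact fun x hx => (hasDerivAt_psi mu hx).hasDerivWithinAt
  · exact fun x hx => (hasDerivAt_psiDeriv mu hx).hasDerivWithinAt
  · exact fun x hx => psiDeriv2_nonneg hmu hx

theorem stmt_1 (mu : ℝ) (hmu : 0 < mu) :
    ∀ l x y : ℝ, 0 ≤ l → l ≤ 1 → 0 ≤ x → 0 ≤ y →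
      psi (l * x + (1 - l) * y) mu ≤ l * psi x mu + (1 - l) * psi y mu := by
  intro l x y hl hl1 hx hy
  simpa using (convexOn_psi hmu.le).2 (mem_Ici.2 hx) (mem_Ici.2 hy) hl (sub_nonneg.2 hl1)
    (add_sub_cancel l 1)
end

section
/- For every l > 1, every x ≥ 0 and every μ > 0, ψ(l·x, μ) ≤ ψ(l,μ) · ψ(x,μ), where ψ(x,μ) = x·exp(μ√(2 log(1+x))). -/
open Real

lemma Real.sqrt_add_le_add_sqrt {a b : ℝ} (ha : 0 ≤ a) (hb : 0 ≤ b) : √(a + b) ≤ √a + √b := by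
  rw [sqrt_le_iff]
  refine ⟨by positivity, ?_⟩
  nlinarith [sq_sqrt ha, sq_sqrt hb, mul_nonneg (sqrt_nonneg a) (sqrt_nonneg b)]

lemma Real.log_one_add_mul_le {a b : ℝ} (ha : 0 ≤ a) (hb : 0 ≤ b) :
    log (1 + a * b) ≤ log (1 + a) + log (1 + b) := by
  rw [← log_mul (by positivity) (by positivity)]
  exact log_le_log (by positivity) (by nlinarith)

lemma sqrt_two_log_one_add_mul_le {a b : ℝ} (ha : 0 ≤ a) (hb : 0 ≤ b) :
    √(2 * log (1 + a * b)) ≤ √(2 * log (1 + a)) + √(2 * log (1 + b)) :=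
  calc √(2 * log (1 + a * b))
      ≤ √(2 * log (1 + a) + 2 * log (1 + b)) := by
        gcongr
        linarith [log_one_add_mul_le ha hb]
    _ ≤ √(2 * log (1 + a)) + √(2 * log (1 + b)) :=
        sqrt_add_le_add_sqrt (by have := log_nonneg (by linarith : 1 ≤ 1 + a); positivity)
          (by have := log_nonneg (by linarith : 1 ≤ 1 + b); positivity)

lemma psi_mul_le {l x mu : ℝ} (hl : 0 ≤ l) (hx : 0 ≤ x) (hmu : 0 ≤ mu) :
    psi (l * x) mu ≤ psi l mu * psi x mu :=
  calc l * x * exp (mu * √(2 * log (1 + l * x)))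
      ≤ l * x * exp (mu * (√(2 * log (1 + l)) + √(2 * log (1 + x)))) := by
        gcongr
        exact sqrt_two_log_one_add_mul_le hl hx
    _ = psi l mu * psi x mu := by
        rw [psi, psi, mul_add, exp_add]
        ring

theorem stmt_3 (l x mu : ℝ) (hl : 1 < l) (hx : 0 ≤ x) (hmu : 0 < mu) :
    psi (l * x) mu ≤ psi l mu * psi x mu :=
  psi_mul_le (by linarith) hx hmu.le
end
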